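/- arXiv:1407.3317 — 3 statements merged into one kernel-verified Lean document; each statement's English description precedes it below -/
import Mathlib

section
/- For every (t̄, r̄) ∈ ℝ² one has cos ψ(t̄, r̄) − cos T(t̄, r̄) = (t̄² − r̄²)·(cos ψ(t̄, r̄) + cos T(t̄, r̄)). Consequently, for the Milne point (t̄, r̄) = (t·cosh χ, t·sinh χ) with t > 0 and χ ∈ ℝ, the Milne time coordinate is recovered as t = √((cos ψ − cos T)/(cos ψ + cos T)). -/
/-!
With `a = arctan (t̄ + r̄)` and `b = arctan (t̄ - r̄)` we have `ψ = a - b` and `T = a + b`, so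
`cos ψ - cos T = 2 sin a sin b` and `cos ψ + cos T = 2 cos a cos b > 0`. Their ratio is
`tan a · tan b = (t̄ + r̄)(t̄ - r̄) = t̄² - r̄²`, which equals `t²` at the Milne point
`(t cosh χ, t sinh χ)`.
-/

/-- The compactified time coordinate `T(t̄, r̄) = arctan(t̄ + r̄) + arctan(t̄ − r̄)`. -/
noncomputable def Tcoord (p : ℝ × ℝ) : ℝ :=
  Real.arctan (p.1 + p.2) + Real.arctan (p.1 - p.2)

/-- The compactified radial coordinate `ψ(t̄, r̄) = arctan(t̄ + r̄) − arctan(t̄ − r̄)`. -/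
noncomputable def psiCoord (p : ℝ × ℝ) : ℝ :=
  Real.arctan (p.1 + p.2) - Real.arctan (p.1 - p.2)

/-- The Milne comoving coordinate map `F(t, χ) = (t·cosh χ, t·sinh χ)`. -/
noncomputable def milneMap (p : ℝ × ℝ) : ℝ × ℝ :=
  (p.1 * Real.cosh p.2, p.1 * Real.sinh p.2)

open Real

lemma Real.cos_sub_sub_cos_add_eq_tan_mul_tan_mul {x y : ℝ} (hx : cos x ≠ 0) (hy : cos y ≠ 0) :
    cos (x - y) - cos (x + y) = tan x * tan y * (cos (x - y) + cos (x + y)) := by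
  rw [cos_sub, cos_add, tan_eq_sin_div_cos, tan_eq_sin_div_cos]
  field_simp
  ring

lemma Real.cos_sub_add_cos_add_arctan_pos (u v : ℝ) :
    0 < cos (arctan u - arctan v) + cos (arctan u + arctan v) := by
  rw [cos_sub, cos_add]
  linarith [mul_pos (cos_arctan_pos u) (cos_arctan_pos v)]

lemma cos_psiCoord_sub_cos_Tcoord (p : ℝ × ℝ) :
    cos (psiCoord p) - cos (Tcoord p)
      = (p.1 ^ 2 - p.2 ^ 2) * (cos (psiCoord p) + cos (Tcoord p)) := by
  rw [psiCoord, Tcoord, cos_sub_sub_cos_add_eq_tan_mul_tan_mul (cos_arctan_pos _).ne'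
    (cos_arctan_pos _).ne', tan_arctan, tan_arctan]
  ring

lemma cos_psiCoord_add_cos_Tcoord_pos (p : ℝ × ℝ) :
    0 < cos (psiCoord p) + cos (Tcoord p) :=
  cos_sub_add_cos_add_arctan_pos _ _

lemma milneMap_fst_sq_sub_snd_sq (t χ : ℝ) :
    (milneMap (t, χ)).1 ^ 2 - (milneMap (t, χ)).2 ^ 2 = t ^ 2 := by
  simp only [milneMap]
  linear_combination t ^ 2 * cosh_sq_sub_sinh_sq χ

/-- `cos ψ − cos T = (t̄² − r̄²)·(cos ψ + cos T)`; consequently at the Milne point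
`(t·cosh χ, t·sinh χ)` with `t > 0`, `t = √((cos ψ − cos T)/(cos ψ + cos T))`. -/
theorem milne_time_from_conformal :
    (∀ p : ℝ × ℝ,
      Real.cos (psiCoord p) - Real.cos (Tcoord p)
        = (p.1 ^ 2 - p.2 ^ 2) * (Real.cos (psiCoord p) + Real.cos (Tcoord p))) ∧
    (∀ t χ : ℝ, 0 < t →
      t = Real.sqrt
        ((Real.cos (psiCoord (milneMap (t, χ))) - Real.cos (Tcoord (milneMap (t, χ))))
          / (Real.cos (psiCoord (milneMap (t, χ))) + Real.cos (Tcoord (milneMap (t, χ)))))) := by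
  refine ⟨cos_psiCoord_sub_cos_Tcoord, fun t χ ht => ?_⟩
  have hsum := cos_psiCoord_add_cos_Tcoord_pos (milneMap (t, χ))
  rw [cos_psiCoord_sub_cos_Tcoord, milneMap_fst_sq_sub_snd_sq, mul_div_cancel_right₀ _ hsum.ne',
    sqrt_sq ht.le]
end

section
/- For every (t̄, r̄) ∈ ℝ² one has t̄·sin ψ(t̄, r̄) = r̄·sin T(t̄, r̄). Consequently, for the Milne point (t̄, r̄) = (t·cosh χ, t·sinh χ) with t > 0 and χ ∈ ℝ, whenever sin T(t̄, r̄) ≠ 0 the Milne radial coordinate is recovered through tanh χ = sin ψ(t̄, r̄)/sin T(t̄, r̄). -/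
/-! Both `sin T` and `sin ψ` have the common denominator `√(1 + (t̄ + r̄)²) √(1 + (t̄ − r̄)²)`,
with numerators `2 t̄` and `2 r̄`. At a Milne point `t̄ = t cosh χ`, `r̄ = t sinh χ`, so their
quotient is `tanh χ`. -/

open Real

lemma sin_arctan_add_arctan (a b : ℝ) :
    sin (arctan a + arctan b) = (a + b) / (√(1 + a ^ 2) * √(1 + b ^ 2)) := by
  rw [sin_add, sin_arctan, cos_arctan, sin_arctan, cos_arctan]
  field_simp

lemma sin_arctan_sub_arctan (a b : ℝ) :
    sin (arctan a - arctan b) = (a - b) / (√(1 + a ^ 2) * √(1 + b ^ 2)) := by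
  rw [sin_sub, sin_arctan, cos_arctan, sin_arctan, cos_arctan]
  field_simp

lemma fst_mul_sin_psiCoord (p : ℝ × ℝ) : p.1 * sin (psiCoord p) = p.2 * sin (Tcoord p) := by
  rw [psiCoord, Tcoord, sin_arctan_sub_arctan, sin_arctan_add_arctan]
  ring

lemma tanh_eq_sin_psiCoord_div_sin_Tcoord {t : ℝ} (ht : t ≠ 0) (χ : ℝ)
    (hT : sin (Tcoord (milneMap (t, χ))) ≠ 0) :
    tanh χ = sin (psiCoord (milneMap (t, χ))) / sin (Tcoord (milneMap (t, χ))) := by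
  have h : t * cosh χ * _ = t * sinh χ * _ := fst_mul_sin_psiCoord (milneMap (t, χ))
  rw [mul_assoc, mul_assoc] at h
  rw [tanh_eq_sinh_div_cosh, div_eq_div_iff (cosh_pos χ).ne' hT]
  linear_combination (mul_left_cancel₀ ht h).symm

/-- `t̄·sin ψ = r̄·sin T`; consequently at the Milne point `(t·cosh χ, t·sinh χ)` with
`t > 0`, whenever `sin T ≠ 0` one recovers `tanh χ = sin ψ / sin T`. -/
theorem milne_radial_from_conformal :
    (∀ p : ℝ × ℝ, p.1 * Real.sin (psiCoord p) = p.2 * Real.sin (Tcoord p)) ∧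
    (∀ t χ : ℝ, 0 < t →
      Real.sin (Tcoord (milneMap (t, χ))) ≠ 0 →
      Real.tanh χ
        = Real.sin (psiCoord (milneMap (t, χ))) / Real.sin (Tcoord (milneMap (t, χ)))) :=
  ⟨fst_mul_sin_psiCoord, fun _ χ ht => tanh_eq_sin_psiCoord_div_sin_Tcoord ht.ne' χ⟩
end

section
/- Let X : Fin 2 → Fin 2 → Fin 2 → Fin 2 → ℂ satisfy the symmetries X_{ABCD} = X_{BACD} and X_{ABCD} = X_{ABDC} (these are the symmetries of the reduced curvature spinor of a metric, not necessarily torsion-free, connection). Define: Ψ_{ABCD} = X_{(ABCD)}, the full symmetrization of X (the average of X over all 24 permutations of its four arguments); Λ = (1/6)·Σ_{A,B,E,F} ε^{AE} ε^{BF} X_{ABEF}; and H_{BC} = (1/2)·Σ_{A,E} ε^{AE} (X_{ABCE} + X_{ACBE}). Then for all A, B, C, D ∈ Fin 2: X_{ABCD} = Ψ_{ABCD} + Λ·(ε_{AC}ε_{BD} + ε_{AD}ε_{BC}) + (1/4)·(ε_{AC}H_{DB} + ε_{AD}H_{CB}) + (1/4)·(ε_{BC}H_{DA} + ε_{BD}H_{CA});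 moreover H_{BC} = H_{CB}. (This is the decomposition X_{ABCD} = Ψ_{ABCD} + Λ(ε_{AC}ε_{BD} + ε_{AD}ε_{BC}) + (1/2)ε_{A(C}H_{D)B} + (1/2)ε_{B(C}H_{D)A} of the curvature spinor into the Weyl part Ψ, the scalar part Λ with 6Λ = X_{AB}{}^{AB}, and the torsion-induced part H_{BC} = X_{A(BC)}{}^{A}; for a Levi-Civita connection H vanishes.) -/
/-!
Under the pair symmetries `X` has only nine independent components, and `Ψ`, `Λ`, `H` are linear
in them. Once `Ψ` is reduced to an average over the six ways of splitting the four indices into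
an unordered first pair and second pair, the decomposition is a finite check on components.
`H` is symmetric by construction.
-/

/-- The antisymmetric ε-spinor: `ε₀₁ = 1`, `ε₁₀ = −1`, `ε₀₀ = ε₁₁ = 0`.
The raised version `ε^{AB}` has the same components. -/
def epsSpinor : Fin 2 → Fin 2 → ℂ := fun A B =>
  if A = 0 ∧ B = 1 then 1 else if A = 1 ∧ B = 0 then -1 else 0

/-- The totally symmetric (Weyl) part `Ψ_{ABCD} = X_{(ABCD)}`: the average of `X` over
all 24 permutations of its four arguments. -/
noncomputable def weylPart (X : Fin 2 → Fin 2 → Fin 2 → Fin 2 → ℂ)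
    (A B C D : Fin 2) : ℂ :=
  (1 / 24) * ∑ σ : Equiv.Perm (Fin 4),
    X (![A, B, C, D] (σ 0)) (![A, B, C, D] (σ 1)) (![A, B, C, D] (σ 2)) (![A, B, C, D] (σ 3))

/-- The scalar part `Λ`, with `6Λ = X_{AB}{}^{AB} = ε^{AE}ε^{BF}X_{ABEF}`. -/
noncomputable def lambdaPart (X : Fin 2 → Fin 2 → Fin 2 → Fin 2 → ℂ) : ℂ :=
  (1 / 6) * ∑ A, ∑ B, ∑ E, ∑ F, epsSpinor A E * epsSpinor B F * X A B E F

/-- The torsion-induced part `H_{BC} = X_{A(BC)}{}^{A}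
  = (1/2)·ε^{AE}(X_{ABCE} + X_{ACBE})`. -/
noncomputable def hPart (X : Fin 2 → Fin 2 → Fin 2 → Fin 2 → ℂ) (B C : Fin 2) : ℂ :=
  (1 / 2) * ∑ A, ∑ E, epsSpinor A E * (X A B C E + X A C B E)

@[simp] lemma epsSpinor_zero_zero : epsSpinor 0 0 = 0 := rfl
@[simp] lemma epsSpinor_zero_one : epsSpinor 0 1 = 1 := rfl
@[simp] lemma epsSpinor_one_zero : epsSpinor 1 0 = -1 := rfl
@[simp] lemma epsSpinor_one_one : epsSpinor 1 1 = 0 := rfl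

lemma hPart_comm (X : Fin 2 → Fin 2 → Fin 2 → Fin 2 → ℂ) (B C : Fin 2) :
    hPart X B C = hPart X C B := by
  simp only [hPart, add_comm]

lemma weylPart_eq_of_pair_symm {X : Fin 2 → Fin 2 → Fin 2 → Fin 2 → ℂ}
    (hsym₁ : ∀ A B C D, X A B C D = X B A C D) (hsym₂ : ∀ A B C D, X A B C D = X A B D C)
    (A B C D : Fin 2) :
    weylPart X A B C D =
      (X A B C D + X A C B D + X A D B C + X B C A D + X B D A C + X C D A B) / 6 := by
  rw [weylPart]
  simp only [← Equiv.Perm.decomposeFin.symm.sum_comp, Fintype.sum_prod_type]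
  simp only [show (1 : Fin 4) = Fin.succ 0 from rfl, show (2 : Fin 4) = Fin.succ 1 from rfl,
    show (3 : Fin 4) = Fin.succ 2 from rfl, show (1 : Fin 3) = Fin.succ 0 from rfl,
    show (2 : Fin 3) = Fin.succ 1 from rfl, show (1 : Fin 2) = Fin.succ 0 from rfl,
    Fin.sum_univ_succ, Finset.univ_unique, Finset.sum_singleton,
    Equiv.Perm.decomposeFin_symm_apply_zero, Equiv.Perm.decomposeFin_symm_apply_succ,
    Equiv.swap_apply_def]
  simp [Fin.ext_iff, Fin.succ]
  simp only [hsym₁ B A, hsym₁ C A, hsym₁ D A, hsym₁ C B, hsym₁ D B, hsym₁ D C,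
    hsym₂ _ _ B A, hsym₂ _ _ C A, hsym₂ _ _ D A, hsym₂ _ _ C B, hsym₂ _ _ D B, hsym₂ _ _ D C]
  ring

lemma eq_weylPart_add_lambdaPart_add_hPart {X : Fin 2 → Fin 2 → Fin 2 → Fin 2 → ℂ}
    (hsym₁ : ∀ A B C D, X A B C D = X B A C D) (hsym₂ : ∀ A B C D, X A B C D = X A B D C)
    (A B C D : Fin 2) :
    X A B C D
      = weylPart X A B C D
        + lambdaPart X * (epsSpinor A C * epsSpinor B D + epsSpinor A D * epsSpinor B C)
        + (1 / 4) * (epsSpinor A C * hPart X D B + epsSpinor A D * hPart X C B)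
        + (1 / 4) * (epsSpinor B C * hPart X D A + epsSpinor B D * hPart X C A) := by
  have h₁ : ∀ C D, X 1 0 C D = X 0 1 C D := fun C D => hsym₁ 1 0 C D
  have h₂ : ∀ A B, X A B 1 0 = X A B 0 1 := fun A B => hsym₂ A B 1 0
  rw [weylPart_eq_of_pair_symm hsym₁ hsym₂]
  fin_cases A <;> fin_cases B <;> fin_cases C <;> fin_cases D <;>
    · simp only [Fin.zero_eta, Fin.mk_one, lambdaPart, hPart, Fin.sum_univ_two, epsSpinor_zero_zero,
        epsSpinor_zero_one, epsSpinor_one_zero, epsSpinor_one_one, h₁, h₂]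
      ring

/-- Decomposition of the reduced curvature spinor of a metric (not necessarily
torsion-free) connection:  if `X_{ABCD} = X_{BACD} = X_{ABDC}`, then
`X_{ABCD} = Ψ_{ABCD} + Λ(ε_{AC}ε_{BD} + ε_{AD}ε_{BC})
  + (1/2)ε_{A(C}H_{D)B} + (1/2)ε_{B(C}H_{D)A}`, and `H` is symmetric. -/
theorem curvature_spinor_decomposition (X : Fin 2 → Fin 2 → Fin 2 → Fin 2 → ℂ)
    (hsym₁ : ∀ A B C D, X A B C D = X B A C D)
    (hsym₂ : ∀ A B C D, X A B C D = X A B D C) :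
    (∀ A B C D,
      X A B C D
        = weylPart X A B C D
          + lambdaPart X * (epsSpinor A C * epsSpinor B D + epsSpinor A D * epsSpinor B C)
          + (1 / 4) * (epsSpinor A C * hPart X D B + epsSpinor A D * hPart X C B)
          + (1 / 4) * (epsSpinor B C * hPart X D A + epsSpinor B D * hPart X C A)) ∧
    (∀ B C, hPart X B C = hPart X C B) :=
  ⟨eq_weylPart_add_lambdaPart_add_hPart hsym₁ hsym₂, hPart_comm X⟩
end
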